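/- arXiv:1707.05240 — 4 statements merged into one kernel-verified Lean document; each statement's English description precedes it below -/
import Mathlib

section
/- If a fractional solution x to the tree-edge covering LP satisfies x(δ(e)) ≥ 4/3 for every tree edge e (no deficient edges), and k is such that k·x is integral, then after splitting each link ℓ into two up-links each with (3/2)·k·x_ℓ copies, every tree edge is covered by at least 2k copies; hence 3k·x dominates the sum of 2k integral feasible tree-edge covers (in the greedy top-down coloring), giving an integral solution of cost at most 3/2 times the cost of x. -/
/-- A link with endpoints `u`, `w` covers a tree edge `e` if `e` lies on the
(unique) path between `u` and `w` in the tree `G`. -/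
def Covers {V : Type*} (G : SimpleGraph V) (u w : V) (e : Sym2 V) : Prop :=
  ∃ p : G.Walk u w, p.IsPath ∧ e ∈ p.edges

open Classical in
/-- `x(δ(e))`: total fractional weight of links covering the tree edge `e`. -/
noncomputable def covWeight {V : Type*} [Fintype V] (G : SimpleGraph V)
    (x : V × V → ℝ) (e : Sym2 V) : ℝ :=
  ∑ ℓ ∈ Finset.univ.filter (fun ℓ : V × V => Covers G ℓ.1 ℓ.2 e), x ℓ

/-!
Root the tree at `r`. The edge from `v` to its parent lies on the `u`–`w` path iff exactly one
of `u`, `w` is a descendant of `v`, so each link splits into two up-paths, from either end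
towards their meet. Take `3k·x_ℓ` copies of both halves of each link `ℓ`: every edge is then
covered at least `3k·x(δ(e)) ≥ 4k` times. Going down the tree, select for each edge exactly
`4k` of its copies, keeping those already selected at the parent edge, and give the newly
selected ones the colours missing there. Every edge then sees all `4k` colours, so each colour
class is a cover, and the cheapest one costs at most `6k·c(x) / 4k = (3/2)·c(x)`.
-/

open Finset in
lemma sum_filter_prod_bool {W M : Type*} [Fintype W] [AddCommMonoid M] (Q : W → Bool → Prop)
    [DecidablePred fun p : W × Bool => Q p.1 p.2] (R : W → Prop) [DecidablePred R]
    (hQR : ∀ w, R w ↔ Q w true ∨ Q w false) (hQ : ∀ w, ¬(Q w true ∧ Q w false)) (f : W → M) :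
    ∑ p ∈ univ.filter (fun p : W × Bool => Q p.1 p.2), f p.1 = ∑ w ∈ univ.filter R, f w := by
  rw [sum_filter, sum_filter, Fintype.sum_prod_type]
  refine sum_congr rfl fun w _ => ?_
  rw [Fintype.sum_bool]
  by_cases h1 : Q w true <;> by_cases h2 : Q w false
  · exact absurd ⟨h1, h2⟩ (hQ w)
  all_goals simp [h1, h2, hQR w]

open Finset in
lemma exists_extend_injOn_fin {α : Type*} [DecidableEq α] {N : ℕ} (col : α → Fin N)
    {A F : Finset α} (hFA : F ⊆ A) (hA : A.card = N) (hF : Set.InjOn col F) :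
    ∃ col' : α → Fin N, Set.InjOn col' A ∧ ∀ a ∉ A \ F, col' a = col a := by
  obtain ⟨g⟩ : Nonempty ((A \ F : Finset α) ↪ (univ \ F.image col : Finset (Fin N))) := by
    apply Function.Embedding.nonempty_of_card_le
    rw [Fintype.card_coe, Fintype.card_coe, card_sdiff_of_subset hFA, card_univ_sdiff,
      card_image_of_injOn hF, hA, Fintype.card_fin]
  refine ⟨fun a => if ha : a ∈ A \ F then g ⟨a, ha⟩ else col a, ?_, fun a ha => dif_neg ha⟩
  have hg : ∀ a (ha : a ∈ A \ F), (g ⟨a, ha⟩ : Fin N) ∉ F.image col := fun a ha =>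
    (mem_sdiff.1 (g ⟨a, ha⟩).2).2
  have hF_of : ∀ {c}, c ∈ (A : Set α) → c ∉ A \ F → c ∈ F := fun hc hc' =>
    not_not.1 fun h => hc' (mem_sdiff.2 ⟨hc, h⟩)
  intro a ha b hb hab
  by_cases ha' : a ∈ A \ F <;> by_cases hb' : b ∈ A \ F <;> simp only [ha', hb', dite_true,
    dite_false] at hab
  · exact congrArg Subtype.val (g.injective (Subtype.ext hab))
  · exact absurd (hab ▸ mem_image_of_mem col (hF_of hb hb')) (hg a ha')
  · exact absurd (hab.symm ▸ mem_image_of_mem col (hF_of ha ha')) (hg b hb')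
  · exact hF (hF_of ha ha') (hF_of hb hb') hab

namespace SimpleGraph.IsTree

variable {V : Type*} {G : SimpleGraph V} (hT : G.IsTree) (r : V)

noncomputable def pathToRoot (v : V) : G.Walk v r := (hT.existsUnique_path v r).choose

lemma isPath_pathToRoot (v : V) : (hT.pathToRoot r v).IsPath :=
  (hT.existsUnique_path v r).choose_spec.1

lemma eq_pathToRoot {v : V} {p : G.Walk v r} (hp : p.IsPath) : p = hT.pathToRoot r v :=
  (hT.existsUnique_path v r).choose_spec.2 p hp

noncomputable def parent (v : V) : V := (hT.pathToRoot r v).getVert 1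

noncomputable def depth (v : V) : ℕ := (hT.pathToRoot r v).length

def IsAncestor (u v : V) : Prop := ∃ n, (hT.parent r)^[n] v = u

variable {r}

lemma pathToRoot_root : hT.pathToRoot r r = .nil := (hT.eq_pathToRoot r .nil).symm

lemma parent_root : hT.parent r r = r := by simp [parent, pathToRoot_root]

lemma depth_root : hT.depth r r = 0 := by simp [depth, pathToRoot_root]

lemma pathToRoot_eq_cons {v : V} (hv : v ≠ r) : ∃ h : G.Adj v (hT.parent r v),
    hT.pathToRoot r v = .cons h (hT.pathToRoot r (hT.parent r v)) := by
  obtain ⟨w, h, q, hq⟩ := (hT.pathToRoot r v).exists_eq_cons_of_ne hv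
  have hw : hT.parent r v = w := by simp [parent, hq]
  subst hw
  have hqp : q.IsPath := (by simpa [hq] using hT.isPath_pathToRoot r v : _ ∧ _).1
  exact ⟨h, hq.trans (by rw [hT.eq_pathToRoot r hqp])⟩

lemma adj_parent {v : V} (hv : v ≠ r) : G.Adj v (hT.parent r v) :=
  (hT.pathToRoot_eq_cons hv).1

lemma depth_parent {v : V} (hv : v ≠ r) : hT.depth r (hT.parent r v) + 1 = hT.depth r v := by
  obtain ⟨h, hp⟩ := hT.pathToRoot_eq_cons hv
  simp [depth, hp]

lemma depth_eq_zero_iff {v : V} : hT.depth r v = 0 ↔ v = r :=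
  ⟨Walk.eq_of_length_eq_zero, by rintro rfl; exact hT.depth_root⟩

lemma depth_iterate_parent (n : ℕ) (v : V) :
    hT.depth r ((hT.parent r)^[n] v) = hT.depth r v - n := by
  induction n with
  | zero => rfl
  | succ n ih =>
    rw [Function.iterate_succ_apply']
    by_cases h : (hT.parent r)^[n] v = r
    · rw [h, depth_root] at ih
      rw [h, parent_root, depth_root]
      omega
    · have := hT.depth_parent h
      omega

lemma iterate_parent_depth (v : V) : (hT.parent r)^[hT.depth r v] v = r := by
  rw [← hT.depth_eq_zero_iff, depth_iterate_parent, Nat.sub_self]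

lemma isAncestor_refl (v : V) : hT.IsAncestor r v v := ⟨0, rfl⟩

lemma isAncestor_parent (v : V) : hT.IsAncestor r (hT.parent r v) v := ⟨1, rfl⟩

lemma root_isAncestor (v : V) : hT.IsAncestor r r v := ⟨_, hT.iterate_parent_depth v⟩

lemma isAncestor_iff {u v : V} :
    hT.IsAncestor r u v ↔ u = v ∨ hT.IsAncestor r u (hT.parent r v) := by
  constructor
  · rintro ⟨_ | n, rfl⟩
    · exact .inl rfl
    · exact .inr ⟨n, rfl⟩
  · rintro (rfl | ⟨n, rfl⟩)
    · exact hT.isAncestor_refl u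
    · exact ⟨n + 1, rfl⟩

variable {hT} in
lemma IsAncestor.trans {u v w : V} (huv : hT.IsAncestor r u v) (hvw : hT.IsAncestor r v w) :
    hT.IsAncestor r u w := by
  obtain ⟨m, rfl⟩ := huv
  obtain ⟨n, rfl⟩ := hvw
  exact ⟨m + n, Function.iterate_add_apply _ _ _ _⟩

variable {hT} in
lemma IsAncestor.depth_le {u v : V} (h : hT.IsAncestor r u v) : hT.depth r u ≤ hT.depth r v := by
  obtain ⟨n, rfl⟩ := h
  rw [depth_iterate_parent]
  omega

variable {hT} in
lemma IsAncestor.eq_of_depth_le {u v : V} (h : hT.IsAncestor r u v)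
    (hd : hT.depth r v ≤ hT.depth r u) : u = v := by
  obtain ⟨n, rfl⟩ := h
  rw [depth_iterate_parent] at hd
  rcases Nat.eq_zero_or_pos n with rfl | hn
  · rfl
  · have hv : v = r := hT.depth_eq_zero_iff.1 (by omega)
    subst hv
    exact Function.iterate_fixed hT.parent_root n

variable {hT} in
lemma IsAncestor.antisymm {u v : V} (huv : hT.IsAncestor r u v) (hvu : hT.IsAncestor r v u) :
    u = v :=
  huv.eq_of_depth_le hvu.depth_le

variable {hT} in
lemma IsAncestor.total {u v w : V} (hu : hT.IsAncestor r u w) (hv : hT.IsAncestor r v w) :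
    hT.IsAncestor r u v ∨ hT.IsAncestor r v u := by
  obtain ⟨m, rfl⟩ := hu
  obtain ⟨n, rfl⟩ := hv
  rcases le_total m n with h | h
  · refine .inr ⟨n - m, ?_⟩
    rw [← Function.iterate_add_apply, Nat.sub_add_cancel h]
  · refine .inl ⟨m - n, ?_⟩
    rw [← Function.iterate_add_apply, Nat.sub_add_cancel h]

lemma not_isAncestor_parent {v : V} (hv : v ≠ r) : ¬ hT.IsAncestor r v (hT.parent r v) := by
  intro h
  have := hT.depth_parent hv
  have := h.depth_le
  omega

lemma isAncestor_root_iff {u : V} : hT.IsAncestor r u r ↔ u = r :=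
  ⟨fun h => h.eq_of_depth_le (by rw [hT.depth_root]; omega),
    by rintro rfl; exact hT.isAncestor_refl _⟩

lemma mem_support_pathToRoot_iff {u v : V} :
    u ∈ (hT.pathToRoot r v).support ↔ hT.IsAncestor r u v := by
  by_cases hv : v = r
  · subst hv
    simp [pathToRoot_root, isAncestor_root_iff]
  · obtain ⟨h, hp⟩ := hT.pathToRoot_eq_cons hv
    rw [hp, Walk.support_cons, List.mem_cons, mem_support_pathToRoot_iff, ← isAncestor_iff]
termination_by hT.depth r v
decreasing_by have := hT.depth_parent hv; omega

lemma parent_eq_of_adj {a b : V} (hadj : G.Adj a b) (h : ¬ hT.IsAncestor r a b) :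
    hT.parent r a = b := by
  have hp : (Walk.cons hadj (hT.pathToRoot r b)).IsPath :=
    (hT.isPath_pathToRoot r b).cons (by rwa [mem_support_pathToRoot_iff])
  simp [parent, ← hT.eq_pathToRoot r hp]

lemma parent_eq_or_parent_eq_of_adj {a b : V} (hadj : G.Adj a b) :
    hT.parent r a = b ∨ hT.parent r b = a := by
  by_cases h : hT.IsAncestor r a b
  · exact .inr (hT.parent_eq_of_adj hadj.symm fun h' => hadj.ne (h.antisymm h'))
  · exact .inl (hT.parent_eq_of_adj hadj h)

lemma exists_eq_parent_of_mem_edgeSet {e : Sym2 V} (he : e ∈ G.edgeSet) :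
    ∃ v ≠ r, e = s(v, hT.parent r v) := by
  induction e with
  | _ a b =>
    have hadj : G.Adj a b := he
    rcases hT.parent_eq_or_parent_eq_of_adj (r := r) hadj with h | h
    · refine ⟨a, fun ha => hadj.ne ?_, by rw [h]⟩
      rw [← h, ha, parent_root]
    · refine ⟨b, fun hb => hadj.ne ?_, by rw [h, Sym2.eq_swap]⟩
      rw [← h, hb, parent_root]

lemma eq_of_adj_of_isAncestor {v x y : V} (hadj : G.Adj x y) (hx : hT.IsAncestor r v x)
    (hy : ¬ hT.IsAncestor r v y) : x = v ∧ y = hT.parent r v := by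
  rcases hT.parent_eq_or_parent_eq_of_adj (r := r) hadj with h | h
  · rcases hT.isAncestor_iff.1 hx with rfl | hx
    · exact ⟨rfl, h.symm⟩
    · exact absurd (h ▸ hx) hy
  · exact absurd (hx.trans (h ▸ hT.isAncestor_parent y)) hy

/-- A walk between the subtree below `v` and its complement uses the edge from `v` to its
parent, since that is the only edge leaving the subtree. -/
lemma mem_edges_of_xor {v a b : V} (q : G.Walk a b)
    (h : Xor (hT.IsAncestor r v a) (hT.IsAncestor r v b)) : s(v, hT.parent r v) ∈ q.edges := by
  have key : ∀ {a b : V} (q : G.Walk a b), hT.IsAncestor r v a → ¬ hT.IsAncestor r v b →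
      s(v, hT.parent r v) ∈ q.edges := by
    intro a b q ha hb
    obtain ⟨d, hd, h1, h2⟩ := q.exists_boundary_dart {x | hT.IsAncestor r v x} ha hb
    obtain ⟨hfst, hsnd⟩ := hT.eq_of_adj_of_isAncestor d.adj h1 h2
    have hde : d.edge = s(v, hT.parent r v) := by rw [← hsnd, ← hfst]; rfl
    exact hde ▸ List.mem_map_of_mem hd
  rcases h with ⟨ha, hb⟩ | ⟨hb, ha⟩
  · exact key q ha hb
  · simpa using key q.reverse hb ha

theorem covers_parent_iff {u w v : V} (hv : v ≠ r) :
    Covers G u w s(v, hT.parent r v) ↔ Xor (hT.IsAncestor r v u) (hT.IsAncestor r v w) := by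
  classical
  constructor
  · rintro ⟨p, hp, he⟩
    by_contra hxor
    obtain ⟨x, hx, hux, hxw⟩ : ∃ x ∈ p.support,
        Xor (hT.IsAncestor r v u) (hT.IsAncestor r v x) ∧
          Xor (hT.IsAncestor r v x) (hT.IsAncestor r v w) := by
      by_cases hu : hT.IsAncestor r v u
      · have := hT.not_isAncestor_parent hv
        exact ⟨_, p.snd_mem_support_of_mem_edges he, by simp only [Xor] at *; tauto⟩
      · have := hT.isAncestor_refl (r := r) v
        exact ⟨v, p.fst_mem_support_of_mem_edges he, by simp only [Xor] at *; tauto⟩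
    -- the two halves of `p` at `x` would both use the edge, which a path uses only once
    have hnd := hp.isTrail.edges_nodup
    rw [← p.take_spec hx, Walk.edges_append, List.nodup_append] at hnd
    exact hnd.2.2 _ (hT.mem_edges_of_xor _ hux) _ (hT.mem_edges_of_xor _ hxw) rfl
  · intro h
    obtain ⟨p, hp, -⟩ := hT.existsUnique_path u w
    exact ⟨p, hp, hT.mem_edges_of_xor p h⟩

variable (r) in
/-- The edge from `v` to its parent lies on the part of the `u`–`w` path that climbs from `u`. -/
def UpCovers (u w v : V) : Prop := hT.IsAncestor r v u ∧ ¬ hT.IsAncestor r v w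

variable {hT} in
lemma UpCovers.ne_root {u w v : V} (h : hT.UpCovers r u w v) : v ≠ r := by
  rintro rfl
  exact h.2 (hT.root_isAncestor w)

variable {hT} in
lemma UpCovers.of_isAncestor {u w x y v : V} (hx : hT.UpCovers r u w x) (hv : hT.UpCovers r u w v)
    (hxy : hT.IsAncestor r x y) (hyv : hT.IsAncestor r y v) : hT.UpCovers r u w y :=
  ⟨hyv.trans hv.1, fun hy => hx.2 (hxy.trans hy)⟩

section Decomposition

open scoped Classical
open Finset

variable (r) {σ : Type*} (ends : σ → V × V) (C : Finset σ)

noncomputable def coveringCopies (v : V) : Finset σ :=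
  C.filter fun s => hT.UpCovers r (ends s).1 (ends s).2 v

/-- `K v` is a set of exactly `N` copies covering the edge above `v`, properly coloured by `col`.
A copy selected at `w` stays selected at every edge below `w` that it covers, so the selected
edges of a copy form a shortened up-path. -/
structure IsTrimmedColoring (N : ℕ) (D : Finset V) (K : V → Finset σ) (col : σ → Fin N) :
    Prop where
  eq_empty : ∀ v ∉ D, K v = ∅
  subset : ∀ v ∈ D, K v ⊆ hT.coveringCopies r ends C v
  card_eq : ∀ v ∈ D, (K v).card = N
  injOn : ∀ v ∈ D, Set.InjOn col (K v)
  forced : ∀ w ∈ D, ∀ v ∈ D, hT.IsAncestor r w v → K w ∩ hT.coveringCopies r ends C v ⊆ K v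

variable {hT r ends C} {N : ℕ} {D : Finset V} {K : V → Finset σ} {col : σ → Fin N}

lemma mem_coveringCopies {v : V} {s : σ} :
    s ∈ hT.coveringCopies r ends C v ↔ s ∈ C ∧ hT.UpCovers r (ends s).1 (ends s).2 v :=
  mem_filter

lemma IsTrimmedColoring.mem_parent (h : hT.IsTrimmedColoring r ends C N D K col) {v w : V}
    {s : σ} (hvD : v ∉ D) (hmax : ∀ w ∈ D, hT.depth r w ≤ hT.depth r v)
    (hpar : hT.parent r v ≠ r → hT.parent r v ∈ D) (hw : w ∈ D) (hsw : s ∈ K w)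
    (hsv : s ∈ hT.coveringCopies r ends C v) : s ∈ K (hT.parent r v) := by
  obtain ⟨hsC, hcov_v⟩ := mem_coveringCopies.1 hsv
  have hcov_w := (mem_coveringCopies.1 (h.subset w hw hsw)).2
  rcases hcov_w.1.total hcov_v.1 with hwv | hvw
  · have hwp : hT.IsAncestor r w (hT.parent r v) :=
      (hT.isAncestor_iff.1 hwv).resolve_left fun hwv => hvD (hwv ▸ hw)
    have hpr : hT.parent r v ≠ r := fun hpr =>
      hcov_w.ne_root (hT.isAncestor_root_iff.1 (by rwa [hpr] at hwp))
    have hsp : s ∈ hT.coveringCopies r ends C (hT.parent r v) :=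
      mem_coveringCopies.2 ⟨hsC, hcov_w.of_isAncestor hcov_v hwp (hT.isAncestor_parent v)⟩
    exact h.forced w hw _ (hpar hpr) hwp (mem_inter.2 ⟨hsw, hsp⟩)
  · exact absurd (hvw.eq_of_depth_le (hmax w hw) ▸ hw) hvD

lemma IsTrimmedColoring.exists_insert (h : hT.IsTrimmedColoring r ends C N D K col) {v : V}
    (hvD : v ∉ D) (hmax : ∀ w ∈ D, hT.depth r w ≤ hT.depth r v)
    (hpar : hT.parent r v ≠ r → hT.parent r v ∈ D)
    (hN : N ≤ (hT.coveringCopies r ends C v).card) :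
    ∃ K' col', hT.IsTrimmedColoring r ends C N (insert v D) K' col' := by
  set F := K (hT.parent r v) ∩ hT.coveringCopies r ends C v with hF
  have hFinj : Set.InjOn col F ∧ F.card ≤ N := by
    by_cases hp : hT.parent r v ∈ D
    · exact ⟨(h.injOn _ hp).mono (by simp [hF]),
        (card_le_card inter_subset_left).trans (h.card_eq _ hp).le⟩
    · simp [hF, h.eq_empty _ hp]
  obtain ⟨Kv, hFK, hKS, hKcard⟩ := exists_subsuperset_card_eq inter_subset_right hFinj.2 hN
  obtain ⟨col', hinj, hcol'⟩ := exists_extend_injOn_fin col hFK hKcard hFinj.1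
  have hfresh : ∀ w ∈ D, ∀ s ∈ K w, col' s = col s := fun w hw s hs => hcol' s fun hs' =>
    (mem_sdiff.1 hs').2 <| mem_inter.2
      ⟨h.mem_parent hvD hmax hpar hw hs (hKS (mem_sdiff.1 hs').1), hKS (mem_sdiff.1 hs').1⟩
  have hne : ∀ w ∈ D, w ≠ v := fun w hw hwv => hvD (hwv ▸ hw)
  refine ⟨Function.update K v Kv, col', ⟨?_, ?_, ?_, ?_, ?_⟩⟩
  · intro w hw
    rw [mem_insert, not_or] at hw
    rw [Function.update_of_ne hw.1, h.eq_empty w hw.2]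
  · rintro w hw
    rcases mem_insert.1 hw with rfl | hw
    · simpa using hKS
    · simpa [Function.update_of_ne (hne w hw)] using h.subset w hw
  · rintro w hw
    rcases mem_insert.1 hw with rfl | hw
    · simpa using hKcard
    · simpa [Function.update_of_ne (hne w hw)] using h.card_eq w hw
  · rintro w hw
    rcases mem_insert.1 hw with rfl | hw
    · simpa using hinj
    · rw [Function.update_of_ne (hne w hw)]
      exact (h.injOn w hw).congr fun s hs => (hfresh w hw s hs).symm
  · rintro w hw x hx hwx s hs
    rw [mem_inter] at hs
    rcases mem_insert.1 hw with rfl | hwD <;> rcases mem_insert.1 hx with rfl | hxD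
    · exact hs.1
    · exact absurd (hwx.eq_of_depth_le (hmax x hxD) ▸ hxD) hvD
    · rw [Function.update_of_ne (hne w hwD)] at hs
      simpa using hFK (mem_inter.2 ⟨h.mem_parent hvD hmax hpar hwD hs.1 hs.2, hs.2⟩)
    · rw [Function.update_of_ne (hne w hwD)] at hs
      rw [Function.update_of_ne (hne x hxD)]
      exact h.forced w hwD x hxD hwx (mem_inter.2 hs)

variable (hT r ends C) in
lemma exists_isTrimmedColoring [Fintype V] (hN : 0 < N)
    (hS : ∀ v ≠ r, N ≤ (hT.coveringCopies r ends C v).card) :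
    ∃ K col, hT.IsTrimmedColoring r ends C N (univ.filter (· ≠ r)) K col := by
  suffices ∀ D : Finset V, (∀ v ∈ D, v ≠ r ∧ ∀ u ≠ r, hT.IsAncestor r u v → u ∈ D) →
      ∃ K col, hT.IsTrimmedColoring r ends C N D K col by
    exact this _ fun v hv => ⟨(mem_filter.1 hv).2, fun u hu _ => mem_filter.2 ⟨mem_univ u, hu⟩⟩
  intro D
  induction D using Finset.induction_on_max_value (hT.depth r) with
  | empty =>
    exact fun _ => ⟨fun _ => ∅, fun _ => ⟨0, hN⟩, by simp, by simp, by simp, by simp, by simp⟩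
  | insert v D hvD hmax ih =>
    intro hclosed
    have hv := (hclosed v (mem_insert_self v D)).1
    have hmem : ∀ u ≠ r, u ≠ v → hT.IsAncestor r u v → u ∈ D := fun u hu huv hanc =>
      (mem_insert.1 ((hclosed v (mem_insert_self v D)).2 u hu hanc)).resolve_left huv
    obtain ⟨K, col, h⟩ := ih fun w hw => by
      refine ⟨(hclosed w (mem_insert_of_mem hw)).1, fun u hu hanc => ?_⟩
      rcases mem_insert.1 ((hclosed w (mem_insert_of_mem hw)).2 u hu hanc) with rfl | hu'
      · exact absurd (hanc.eq_of_depth_le (hmax w hw) ▸ hw) hvD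
      · exact hu'
    exact h.exists_insert hvD hmax (fun hp => hmem _ hp (fun he => hT.not_isAncestor_parent hv
      (by rw [he]; exact hT.isAncestor_refl v)) (hT.isAncestor_parent v)) (hS v hv)

variable (hT r ends C) in
theorem exists_coloring_of_le_card_coveringCopies [Fintype V] (hN : 0 < N)
    (hS : ∀ v ≠ r, N ≤ (hT.coveringCopies r ends C v).card) :
    ∃ col : σ → Fin N, ∀ v ≠ r, ∀ t,
      ∃ s ∈ C, hT.UpCovers r (ends s).1 (ends s).2 v ∧ col s = t := by
  obtain ⟨K, col, h⟩ := exists_isTrimmedColoring hT r ends C hN hS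
  refine ⟨col, fun v hv t => ?_⟩
  have hvD : v ∈ univ.filter (· ≠ r) := mem_filter.2 ⟨mem_univ v, hv⟩
  have himg : (K v).image col = univ := eq_univ_of_card _ <| by
    rw [card_image_of_injOn (h.injOn v hvD), h.card_eq v hvD, Fintype.card_fin]
  obtain ⟨s, hs, rfl⟩ := mem_image.1 (himg ▸ mem_univ t)
  exact ⟨s, mem_coveringCopies.1 (h.subset v hvD hs) |>.1,
    (mem_coveringCopies.1 (h.subset v hvD hs)).2, rfl⟩

end Decomposition

end SimpleGraph.IsTree

section Rounding

open scoped Classical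
open Finset

variable {V : Type*}

def halfEnds (p : (V × V) × Bool) : V × V := if p.2 then p.1 else p.1.swap

noncomputable def halfLinkCopies [Fintype V] (m : V × V → ℕ) :
    Finset (Σ _ : (V × V) × Bool, ℕ) :=
  univ.sigma fun p => range (m p.1)

lemma sum_halfLinkCopies [Fintype V] {M : Type*} [AddCommMonoid M] (m : V × V → ℕ)
    (f : V × V → M) : ∑ s ∈ halfLinkCopies m, f s.1.1 = ∑ ℓ, (2 * m ℓ) • f ℓ := by
  simp [halfLinkCopies, sum_sigma, Fintype.sum_prod_type, mul_nsmul', two_nsmul]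

namespace SimpleGraph.IsTree

variable {G : SimpleGraph V}

lemma covers_parent_iff_upCovers_halfEnds (hT : G.IsTree) {r v : V} (hv : v ≠ r) (ℓ : V × V) :
    Covers G ℓ.1 ℓ.2 s(v, hT.parent r v) ↔
      hT.UpCovers r (halfEnds (ℓ, true)).1 (halfEnds (ℓ, true)).2 v ∨
        hT.UpCovers r (halfEnds (ℓ, false)).1 (halfEnds (ℓ, false)).2 v :=
  hT.covers_parent_iff hv

lemma card_coveringCopies_halfLinkCopies [Fintype V] (hT : G.IsTree) {r v : V} (hv : v ≠ r)
    {m : V × V → ℕ} :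
    (hT.coveringCopies r (fun s => halfEnds s.1) (halfLinkCopies m) v).card =
      ∑ ℓ ∈ univ.filter (fun ℓ : V × V => Covers G ℓ.1 ℓ.2 s(v, hT.parent r v)), m ℓ := by
  have hsigma : hT.coveringCopies r (fun s => halfEnds s.1) (halfLinkCopies m) v =
      (univ.filter fun p => hT.UpCovers r (halfEnds p).1 (halfEnds p).2 v).sigma
        fun p => range (m p.1) := by
    ext s
    simp [coveringCopies, halfLinkCopies, and_comm]
  rw [hsigma, card_sigma]
  simp only [card_range]
  exact sum_filter_prod_bool (fun ℓ b => hT.UpCovers r (halfEnds (ℓ, b)).1 (halfEnds (ℓ, b)).2 v)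
    _ (hT.covers_parent_iff_upCovers_halfEnds hv) (fun _ h => h.1.2 h.2.1) _

theorem exists_cover_cost_le [Fintype V] (hT : G.IsTree) (r : V) (x : V × V → ℝ)
    (hfeas : ∀ e ∈ G.edgeSet, 4/3 ≤ covWeight G x e) (k : ℕ) (hk : 0 < k) (m : V × V → ℕ)
    (hm : ∀ ℓ, (k : ℝ) * x ℓ = m ℓ) (c : V × V → ℝ) (hc : ∀ ℓ, 0 ≤ c ℓ) :
    ∃ A : Finset (V × V), (∀ e ∈ G.edgeSet, ∃ ℓ ∈ A, Covers G ℓ.1 ℓ.2 e) ∧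
      ∑ ℓ ∈ A, c ℓ ≤ (3/2) * ∑ ℓ : V × V, c ℓ * x ℓ := by
  -- `3k·x_ℓ` copies per half-link and `4k` colours: twice the numbers of the informal
  -- argument, so that the multiplicities are integers
  set C := halfLinkCopies fun ℓ => 3 * m ℓ
  have hS : ∀ v ≠ r, 4 * k ≤ (hT.coveringCopies r (fun s => halfEnds s.1) C v).card := by
    intro v hv
    rw [hT.card_coveringCopies_halfLinkCopies hv (m := fun ℓ => 3 * m ℓ), ← Nat.cast_le (α := ℝ)]
    calc ((4 * k : ℕ) : ℝ) = 3 * k * (4/3) := by push_cast; ring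
      _ ≤ 3 * k * covWeight G x s(v, hT.parent r v) := by
        gcongr
        exact hfeas _ (hT.adj_parent hv)
      _ = _ := by simp [covWeight, mul_sum, ← hm, mul_assoc]
  obtain ⟨col, hcol⟩ :=
    exists_coloring_of_le_card_coveringCopies hT r _ C (by omega : 0 < 4 * k) hS
  have hcost : ∑ s ∈ C, c s.1.1 ≤ (univ : Finset (Fin (4 * k))).card •
      ((3/2) * ∑ ℓ, c ℓ * x ℓ) := by
    simp only [C, sum_halfLinkCopies, card_univ, Fintype.card_fin, nsmul_eq_mul, mul_sum]
    refine sum_le_sum fun ℓ _ => le_of_eq ?_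
    push_cast
    rw [← hm]
    ring
  obtain ⟨t, -, ht⟩ := exists_sum_fiber_le_of_maps_to_of_sum_le_nsmul (f := col)
    (fun _ _ => mem_univ _) (univ_nonempty_iff.2 ⟨⟨0, by omega⟩⟩) hcost
  refine ⟨(C.filter (col · = t)).image (·.1.1), fun e he => ?_,
    (sum_image_le_of_nonneg fun _ _ => hc _).trans ht⟩
  obtain ⟨v, hv, rfl⟩ := hT.exists_eq_parent_of_mem_edgeSet (r := r) he
  obtain ⟨s, hsC, hcov, rfl⟩ := hcol v hv t
  refine ⟨s.1.1, mem_image_of_mem _ (mem_filter.2 ⟨hsC, rfl⟩),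
    (hT.covers_parent_iff_upCovers_halfEnds hv s.1.1).2 ?_⟩
  rcases s with ⟨⟨ℓ, _ | _⟩, i⟩
  exacts [.inr hcov, .inl hcov]

end SimpleGraph.IsTree

end Rounding

open Classical in
theorem stmt6_general {V : Type*} [Fintype V] (G : SimpleGraph V)
    (hT : G.IsTree) (r : V)
    (x : V × V → ℝ)
    (hfeas : ∀ e ∈ G.edgeSet, 4/3 ≤ covWeight G x e)
    (k : ℕ) (hk : 0 < k) (hint : ∀ ℓ, ∃ m : ℕ, (k : ℝ) * x ℓ = m)
    (half : V × V → Bool → Sym2 V → Prop)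
    (hsplit : ∀ ℓ e, Covers G ℓ.1 ℓ.2 e ↔ (half ℓ true e ∨ half ℓ false e))
    (hdisj : ∀ ℓ e, ¬(half ℓ true e ∧ half ℓ false e))
    (c : V × V → ℝ) (hc : ∀ ℓ, 0 ≤ c ℓ) :
    (∀ e ∈ G.edgeSet,
      (2 * k : ℝ) ≤ ∑ p ∈ Finset.univ.filter
        (fun p : (V × V) × Bool => half p.1 p.2 e), (3/2) * k * x p.1) ∧
    (∃ A : Finset (V × V),
      (∀ e ∈ G.edgeSet, ∃ ℓ ∈ A, Covers G ℓ.1 ℓ.2 e) ∧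
      ∑ ℓ ∈ A, c ℓ ≤ (3/2) * ∑ ℓ : V × V, c ℓ * x ℓ) := by
  refine ⟨fun e he => ?_, ?_⟩
  · rw [sum_filter_prod_bool (fun ℓ b => half ℓ b e) (fun ℓ => Covers G ℓ.1 ℓ.2 e)
      (fun ℓ => hsplit ℓ e) (fun ℓ => hdisj ℓ e) fun ℓ => 3/2 * (k : ℝ) * x ℓ,
      ← Finset.mul_sum]
    calc (2 * k : ℝ) = 3/2 * k * (4/3) := by ring
      _ ≤ 3/2 * k * covWeight G x e := by gcongr; exact hfeas e he
  · choose m hm using hint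
    exact hT.exists_cover_cost_le r x hfeas k hk m hm c hc

open Classical in
theorem stmt6 {V : Type*} [Fintype V] [DecidableEq V] (G : SimpleGraph V)
    (hT : G.IsTree) (r : V)
    (x : V × V → ℝ) (hx0 : ∀ ℓ, 0 ≤ x ℓ)
    (hfeas : ∀ e ∈ G.edgeSet, 4/3 ≤ covWeight G x e)
    (k : ℕ) (hk : 0 < k) (hint : ∀ ℓ, ∃ m : ℕ, (k : ℝ) * x ℓ = m)
    (half : V × V → Bool → Sym2 V → Prop)
    (hsplit : ∀ ℓ e, Covers G ℓ.1 ℓ.2 e ↔ (half ℓ true e ∨ half ℓ false e))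
    (hdisj : ∀ ℓ e, ¬(half ℓ true e ∧ half ℓ false e))
    (c : V × V → ℝ) (hc : ∀ ℓ, 0 ≤ c ℓ) :
    (∀ e ∈ G.edgeSet,
      (2 * k : ℝ) ≤ ∑ p ∈ Finset.univ.filter
        (fun p : (V × V) × Bool => half p.1 p.2 e), (3/2) * k * x p.1) ∧
    (∃ A : Finset (V × V),
      (∀ e ∈ G.edgeSet, ∃ ℓ ∈ A, Covers G ℓ.1 ℓ.2 e) ∧
      ∑ ℓ ∈ A, c ℓ ≤ (3/2) * ∑ ℓ : V × V, c ℓ * x ℓ) :=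
  stmt6_general G hT r x hfeas k hk hint half hsplit hdisj c hc
end

section
/- Let T be a tree with link set L and nonnegative link costs. For every subset S ⊆ V(T) of odd size, every integral feasible TAP solution x (the 0/1 indicator of a link set covering every tree edge) satisfies x(δ(S)) + Σ_{e ∈ δ(S)∩E(T)} x(δ(e)) ≥ |δ(S) ∩ E(T)| + 1. -/
section Aux

variable {V : Type*} [Fintype V] [DecidableEq V]

lemma cross_sym2 (S : Finset V) (u v : V) :
    (∃ a b : V, s(u,v) = s(a,b) ∧ a ∈ S ∧ b ∉ S) ↔ ((u ∈ S ∧ v ∉ S) ∨ (v ∈ S ∧ u ∉ S)) := by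
  constructor
  · rintro ⟨a, b, hab, ha, hb⟩
    rw [Sym2.eq_iff] at hab
    rcases hab with ⟨rfl, rfl⟩ | ⟨rfl, rfl⟩ <;> tauto
  · rintro (⟨h1, h2⟩ | ⟨h1, h2⟩)
    · exact ⟨u, v, rfl, h1, h2⟩
    · exact ⟨v, u, Sym2.eq_swap, h1, h2⟩

open Classical in
lemma cross_ind (S : Finset V) (u v : V) :
    (if (∃ a b : V, s(u,v) = s(a,b) ∧ a ∈ S ∧ b ∉ S) then (1 : ZMod 2) else 0)
      = (if u ∈ S then (1 : ZMod 2) else 0) + (if v ∈ S then (1 : ZMod 2) else 0) := by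
  have hiff := cross_sym2 S u v
  by_cases hu : u ∈ S <;> by_cases hv : v ∈ S
  · rw [if_neg (by rw [hiff]; tauto), if_pos hu, if_pos hv]; decide
  · rw [if_pos (by rw [hiff]; tauto), if_pos hu, if_neg hv]; decide
  · rw [if_pos (by rw [hiff]; tauto), if_neg hu, if_pos hv]; decide
  · rw [if_neg (by rw [hiff]; tauto), if_neg hu, if_neg hv]; decide

open Classical in
lemma walk_parity (G : SimpleGraph V) (S : Finset V) {u w : V} (p : G.Walk u w) :
    ((p.edges.countP (fun e => decide (∃ a b : V, e = s(a,b) ∧ a ∈ S ∧ b ∉ S)) : ℕ) : ZMod 2)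
      = (if u ∈ S then (1 : ZMod 2) else 0) + (if w ∈ S then (1 : ZMod 2) else 0) := by
  induction p with
  | nil => simp [CharTwo.add_self_eq_zero]
  | @cons a b c h q ih =>
    rw [SimpleGraph.Walk.edges_cons, List.countP_cons]
    push_cast
    rw [ih]
    have hcr := cross_ind S a b
    by_cases hc : (∃ x y : V, s(a,b) = s(x,y) ∧ x ∈ S ∧ y ∉ S)
    · rw [if_pos hc] at hcr
      simp only [hc, decide_eq_true_eq, if_true]
      by_cases ha : a ∈ S <;> by_cases hb : b ∈ S <;> by_cases hc2 : c ∈ S <;>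
        simp only [ha, hb, hc2, if_true, if_false] at hcr ⊢ <;> revert hcr <;> decide
    · rw [if_neg hc] at hcr
      simp only [hc, decide_eq_true_eq, if_false]
      by_cases ha : a ∈ S <;> by_cases hb : b ∈ S <;> by_cases hc2 : c ∈ S <;>
        simp only [ha, hb, hc2, if_true, if_false] at hcr ⊢ <;> revert hcr <;> decide

open Classical in
lemma link_parity (G : SimpleGraph V) [DecidableRel G.Adj]
    (hT : G.IsTree) (S : Finset V) (u w : V) :
    ((((G.edgeFinset.filter (fun e => ∃ a b : V, e = s(a,b) ∧ a ∈ S ∧ b ∉ S)).filter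
        (fun e => Covers G u w e)).card : ℕ) : ZMod 2)
      = (if u ∈ S then (1 : ZMod 2) else 0) + (if w ∈ S then (1 : ZMod 2) else 0) := by
  obtain ⟨p, hp, hun⟩ := hT.existsUnique_path u w
  have hset : (G.edgeFinset.filter (fun e => ∃ a b : V, e = s(a,b) ∧ a ∈ S ∧ b ∉ S)).filter
      (fun e => Covers G u w e)
      = (p.edges.filter (fun e => decide (∃ a b : V, e = s(a,b) ∧ a ∈ S ∧ b ∉ S))).toFinset := by
    ext e
    simp only [Finset.mem_filter, List.mem_toFinset, List.mem_filter,
      SimpleGraph.mem_edgeFinset, decide_eq_true_eq]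
    constructor
    · rintro ⟨⟨hedge, hcr⟩, q, hq, he⟩
      exact ⟨(hun q hq) ▸ he, hcr⟩
    · rintro ⟨he, hcr⟩
      exact ⟨⟨p.edges_subset_edgeSet he, hcr⟩, p, hp, he⟩
  rw [hset, List.toFinset_card_of_nodup (hp.edges_nodup.filter _),
    ← List.countP_eq_length_filter]
  exact walk_parity G S p

open Classical in
lemma cut_parity (G : SimpleGraph V) [DecidableRel G.Adj] (S : Finset V) :
    (((G.edgeFinset.filter (fun e => ∃ a b : V, e = s(a,b) ∧ a ∈ S ∧ b ∉ S)).card : ℕ) : ZMod 2)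
      = ∑ v ∈ S, ((G.degree v : ℕ) : ZMod 2) := by
  have hdeg : ∀ v : V, G.degree v = (G.edgeFinset.filter (fun e => v ∈ e)).card := by
    intro v
    rw [← SimpleGraph.card_incidenceFinset_eq_degree, SimpleGraph.incidenceFinset_eq_filter]
  have h1 : ∑ v ∈ S, ((G.degree v : ℕ) : ZMod 2)
      = ∑ e ∈ G.edgeFinset, ∑ v ∈ S, (if v ∈ e then (1 : ZMod 2) else 0) := by
    rw [Finset.sum_comm]
    refine Finset.sum_congr rfl fun v _ => ?_
    rw [hdeg v, Finset.card_filter]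
    push_cast
    exact Finset.sum_congr rfl fun e _ => by split <;> simp
  have h2 : ∀ e ∈ G.edgeFinset, ∑ v ∈ S, (if v ∈ e then (1 : ZMod 2) else 0)
      = (if (∃ a b : V, e = s(a,b) ∧ a ∈ S ∧ b ∉ S) then (1 : ZMod 2) else 0) := by
    intro e he
    induction e with
    | _ a b =>
      have hab : a ≠ b := (SimpleGraph.mem_edgeFinset.1 he).ne
      have hfc : ∑ v ∈ S, (if v ∈ s(a,b) then (1 : ZMod 2) else 0)
          = ((S.filter (fun v => v ∈ s(a,b))).card : ZMod 2) := by
        rw [Finset.card_filter]; push_cast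
        exact Finset.sum_congr rfl fun v _ => by split <;> simp
      have hun : S.filter (fun v => v ∈ s(a,b))
          = S.filter (fun v => v = a) ∪ S.filter (fun v => v = b) := by
        rw [← Finset.filter_or]
        exact Finset.filter_congr fun v _ => by simp [Sym2.mem_iff]
      have hdisj : Disjoint (S.filter (fun v => v = a)) (S.filter (fun v => v = b)) := by
        simp only [Finset.disjoint_left, Finset.mem_filter]
        rintro x ⟨-, rfl⟩ ⟨-, rfl⟩
        exact hab rfl
      have hcard : (S.filter (fun v => v ∈ s(a,b))).card
          = (if a ∈ S then 1 else 0) + (if b ∈ S then 1 else 0) := by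
        rw [hun, Finset.card_union_of_disjoint hdisj, Finset.filter_eq', Finset.filter_eq']
        split <;> split <;> simp
      rw [hfc, hcard]
      by_cases hc : (a ∈ S ∧ b ∉ S) ∨ (b ∈ S ∧ a ∉ S)
      · rw [if_pos ((cross_sym2 S a b).2 hc)]
        rcases hc with ⟨h1, h2⟩ | ⟨h1, h2⟩ <;> simp [h1, h2]
      · rw [if_neg (fun h => hc ((cross_sym2 S a b).1 h))]
        by_cases ha : a ∈ S <;> by_cases hb : b ∈ S <;> simp [ha, hb] at hc ⊢ <;>
          first | decide | tauto
  rw [h1, Finset.sum_congr rfl h2, Finset.sum_boole]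

open Classical in
lemma crossL_ind (S : Finset V) (x y : V) :
    (if ((x ∈ S ∧ y ∉ S) ∨ (y ∈ S ∧ x ∉ S)) then (1 : ZMod 2) else 0)
      = (if x ∈ S then (1 : ZMod 2) else 0) + (if y ∈ S then (1 : ZMod 2) else 0) := by
  by_cases hx : x ∈ S <;> by_cases hy : y ∈ S
  · rw [if_neg (by tauto), if_pos hx, if_pos hy]; decide
  · rw [if_pos (by tauto), if_pos hx, if_neg hy]; decide
  · rw [if_pos (by tauto), if_neg hx, if_pos hy]; decide
  · rw [if_neg (by tauto), if_neg hx, if_neg hy]; decide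

end Aux

/- STATEMENT 8: validity of the ODD-LP constraints for integral TAP solutions.
For a (binary) tree `G`, a link set `A` covering every tree edge, and an odd
vertex set `S`:
`x(δ(S)) + Σ_{e ∈ δ(S)∩E(T)} x(δ(e)) ≥ |δ(S)∩E(T)| + 1`,
where `x` is the 0/1 indicator of `A`. -/
open Classical in
theorem stmt8 {V : Type*} [Fintype V] [DecidableEq V] (G : SimpleGraph V)
    [DecidableRel G.Adj] (hT : G.IsTree)
    (hdeg : ∀ v : V, G.degree v = 1 ∨ G.degree v = 3)
    (A : Finset (V × V))
    (hcov : ∀ e ∈ G.edgeSet, ∃ ℓ ∈ A, Covers G ℓ.1 ℓ.2 e)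
    (S : Finset V) (hS : Odd S.card) :
    (G.edgeFinset.filter (fun e => ∃ a b : V, e = s(a, b) ∧ a ∈ S ∧ b ∉ S)).card + 1 ≤
      (A.filter (fun ℓ => (ℓ.1 ∈ S ∧ ℓ.2 ∉ S) ∨ (ℓ.1 ∉ S ∧ ℓ.2 ∈ S))).card +
      ∑ e ∈ G.edgeFinset.filter (fun e => ∃ a b : V, e = s(a, b) ∧ a ∈ S ∧ b ∉ S),
        (A.filter (fun ℓ => Covers G ℓ.1 ℓ.2 e)).card := by
  set F := G.edgeFinset.filter (fun e => ∃ a b : V, e = s(a, b) ∧ a ∈ S ∧ b ∉ S) with hF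
  set B := A.filter (fun ℓ => (ℓ.1 ∈ S ∧ ℓ.2 ∉ S) ∨ (ℓ.1 ∉ S ∧ ℓ.2 ∈ S)) with hB
  -- parity of |F|
  have hFodd : ((F.card : ℕ) : ZMod 2) = 1 := by
    rw [hF, cut_parity G S]
    have : ∀ v ∈ S, ((G.degree v : ℕ) : ZMod 2) = 1 := by
      intro v _
      rcases hdeg v with h | h <;> rw [h] <;> decide
    rw [Finset.sum_congr rfl this, Finset.sum_const, nsmul_eq_mul, mul_one]
    obtain ⟨k, hk⟩ := hS
    rw [hk]
    push_cast
    have h2 : (2 : ZMod 2) = 0 := rfl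
    rw [h2, zero_mul, zero_add]
  -- swap the double sum
  have hswap : ∑ e ∈ F, (A.filter (fun ℓ => Covers G ℓ.1 ℓ.2 e)).card
      = ∑ ℓ ∈ A, (F.filter (fun e => Covers G ℓ.1 ℓ.2 e)).card := by
    simp_rw [Finset.card_filter]
    exact Finset.sum_comm
  -- parity of the right-hand side
  have hR : ((B.card + ∑ e ∈ F, (A.filter (fun ℓ => Covers G ℓ.1 ℓ.2 e)).card : ℕ) : ZMod 2)
      = 0 := by
    rw [Nat.cast_add, hswap]
    have hBc : ((B.card : ℕ) : ZMod 2)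
        = ∑ ℓ ∈ A, (if ((ℓ.1 ∈ S ∧ ℓ.2 ∉ S) ∨ (ℓ.1 ∉ S ∧ ℓ.2 ∈ S)) then (1 : ZMod 2) else 0) := by
      rw [hB, Finset.card_filter]
      push_cast
      exact Finset.sum_congr rfl fun ℓ _ => by split <;> simp
    have hsum : ((∑ ℓ ∈ A, (F.filter (fun e => Covers G ℓ.1 ℓ.2 e)).card : ℕ) : ZMod 2)
        = ∑ ℓ ∈ A, ((if ℓ.1 ∈ S then (1 : ZMod 2) else 0) + (if ℓ.2 ∈ S then (1 : ZMod 2) else 0)) := by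
      push_cast
      exact Finset.sum_congr rfl fun ℓ _ => link_parity G hT S ℓ.1 ℓ.2
    rw [hBc, hsum, ← Finset.sum_add_distrib]
    refine Finset.sum_eq_zero fun ℓ _ => ?_
    have h1 := crossL_ind S ℓ.1 ℓ.2
    by_cases hx : ℓ.1 ∈ S <;> by_cases hy : ℓ.2 ∈ S <;>
      simp only [hx, hy, if_true, if_false] at h1 ⊢ <;> revert h1 <;> decide
  -- the RHS is at least |F|
  have hge : F.card ≤ B.card + ∑ e ∈ F, (A.filter (fun ℓ => Covers G ℓ.1 ℓ.2 e)).card := by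
    have h1 : F.card ≤ ∑ e ∈ F, (A.filter (fun ℓ => Covers G ℓ.1 ℓ.2 e)).card := by
      calc F.card = ∑ _e ∈ F, 1 := by rw [Finset.sum_const, smul_eq_mul, mul_one]
        _ ≤ _ := by
          refine Finset.sum_le_sum fun e heF => ?_
          have heE : e ∈ G.edgeSet := by
            rw [hF, Finset.mem_filter] at heF
            exact SimpleGraph.mem_edgeFinset.1 heF.1
          obtain ⟨ℓ, hℓA, hℓc⟩ := hcov e heE
          exact Finset.card_pos.2 ⟨ℓ, Finset.mem_filter.2 ⟨hℓA, hℓc⟩⟩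
    exact h1.trans (Nat.le_add_left _ _)
  -- conclude
  have hne : F.card ≠ B.card + ∑ e ∈ F, (A.filter (fun ℓ => Covers G ℓ.1 ℓ.2 e)).card := by
    intro h
    rw [h, hR] at hFodd
    exact one_ne_zero hFodd.symm
  omega
end

section
/- In the pairing produced by the swapping procedure (Algorithm 4) on 2k links f_1,…,f_{2k} covering deficient edge e_1 and 2k links g_1,…,g_{2k} covering adjacent deficient edge e_2 (with e_1, e_2 adjacent tree edges at the start of an abundant path Q): performing a swap — replacing pairs (f_i, g_j) and (f_{i'}, g_{j'}) by (f_i, g_{j'}) and (f_{i'}, g_j), where some edge e not on Q is covered by both f_i and g_j but by neither f_{i'} nor g_{j'} — never increases, for any tree edge e' not on Q, the number of pairs whose two links both cover e'. -/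
namespace Stmt16Aux

open SimpleGraph

variable {V : Type*} [DecidableEq V] {G : SimpleGraph V}

/-- An edge different from `h` is still present after deleting `h`. -/
lemma reach_of_edge (h : Sym2 V) {z w : V} (hzw : G.Adj z w) (hne : s(z, w) ≠ h) :
    (G.deleteEdges {h}).Reachable z w :=
  SimpleGraph.Adj.reachable (by
    rw [SimpleGraph.deleteEdges_adj]
    exact ⟨hzw, by simpa using hne⟩)

/-- In a tree every edge is a bridge. -/
lemma not_reach_del_self (hT : G.IsTree) {x y : V} (hxy : G.Adj x y) :
    ¬ (G.deleteEdges {s(x, y)}).Reachable x y := by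
  rintro ⟨W⟩
  have hsub : ∀ e' ∈ W.edges, e' ∈ G.edgeSet := fun e' hW =>
    ((SimpleGraph.edgeSet_deleteEdges _).symm ▸ W.edges_subset_edgeSet hW).1
  have heW : s(x, y) ∉ W.edges := by
    intro hW
    have := W.edges_subset_edgeSet hW
    rw [SimpleGraph.edgeSet_deleteEdges] at this
    exact this.2 rfl
  set q := (W.transfer G hsub).bypass with hqdef
  have hq : q.IsPath := SimpleGraph.Walk.bypass_isPath _
  have heq : s(x, y) ∉ q.edges := fun hq' => heW (by
    have := SimpleGraph.Walk.edges_bypass_subset _ hq'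
    rwa [SimpleGraph.Walk.edges_transfer] at this)
  have huniq := hT.IsAcyclic.path_unique (SimpleGraph.Path.singleton hxy) ⟨q, hq⟩
  apply heq
  have : (SimpleGraph.Path.singleton hxy : G.Walk x y) = q := congrArg Subtype.val huniq
  rw [← this]
  exact SimpleGraph.Path.mk'_mem_edges_singleton hxy

/-- After removing the edge `s(x,y)` from a tree, every vertex can still reach
`x` or `y`. -/
lemma reach_del_or_aux {x y : V} {s t : V} (W : G.Walk s t)
    (hend : (G.deleteEdges {s(x, y)}).Reachable t x ∨ (G.deleteEdges {s(x, y)}).Reachable t y) :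
    (G.deleteEdges {s(x, y)}).Reachable s x ∨ (G.deleteEdges {s(x, y)}).Reachable s y := by
  induction W with
  | nil => exact hend
  | @cons v u _ h p ih =>
    by_cases hc : s(v, u) = s(x, y)
    · rw [Sym2.eq_iff] at hc
      rcases hc with ⟨rfl, rfl⟩ | ⟨rfl, rfl⟩
      · exact Or.inl (SimpleGraph.Reachable.refl _)
      · exact Or.inr (SimpleGraph.Reachable.refl _)
    · have hvu : (G.deleteEdges {s(x, y)}).Reachable v u := reach_of_edge _ h hc
      rcases ih hend with h' | h'
      · exact Or.inl (hvu.trans h')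
      · exact Or.inr (hvu.trans h')

lemma reach_del_or (hT : G.IsTree) {x y : V} (hxy : G.Adj x y) (v : V) :
    (G.deleteEdges {s(x, y)}).Reachable v x ∨ (G.deleteEdges {s(x, y)}).Reachable v y := by
  obtain ⟨W⟩ := hT.isConnected.preconnected v x
  exact reach_del_or_aux W (Or.inl (SimpleGraph.Reachable.refl _))

/-- Two vertices on the side of the cut `s(x,y)` opposite to `a` can reach each
other. -/
lemma reach_del_of_both (hT : G.IsTree) {x y : V} (hxy : G.Adj x y) {u v a : V}
    (hu : ¬ (G.deleteEdges {s(x, y)}).Reachable u a)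
    (hv : ¬ (G.deleteEdges {s(x, y)}).Reachable v a) :
    (G.deleteEdges {s(x, y)}).Reachable u v := by
  rcases reach_del_or hT hxy u with hu1 | hu1 <;>
    rcases reach_del_or hT hxy v with hv1 | hv1 <;>
      rcases reach_del_or hT hxy a with ha1 | ha1 <;>
        first
          | exact absurd (hu1.trans ha1.symm) hu
          | exact absurd (hv1.trans ha1.symm) hv
          | exact hu1.trans hv1.symm

/-- The laminarity lemma: if `u` can reach `v` avoiding `h` but not avoiding
`s(z,w)`, then the `h`-avoiding walk passes through both `z` and `w`. -/
lemma cross (h : Sym2 V) {z w u v : V} (hzw : G.Adj z w)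
    (huv : (G.deleteEdges {h}).Reachable u v)
    (hne : ¬ (G.deleteEdges {s(z, w)}).Reachable u v) :
    (G.deleteEdges {h}).Reachable u z ∧ (G.deleteEdges {h}).Reachable u w := by
  obtain ⟨W⟩ := huv
  by_cases hc : s(z, w) ∈ W.edges
  · have hz : z ∈ W.support := W.fst_mem_support_of_mem_edges hc
    have hw : w ∈ W.support := W.snd_mem_support_of_mem_edges hc
    exact ⟨(W.takeUntil z hz).reachable, (W.takeUntil w hw).reachable⟩
  · exfalso
    apply hne
    have hsub : ∀ e ∈ W.edges, e ∈ (G.deleteEdges {s(z, w)}).edgeSet := by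
      intro e heW
      have h1 := W.edges_subset_edgeSet heW
      rw [SimpleGraph.edgeSet_deleteEdges] at h1 ⊢
      refine ⟨h1.1, ?_⟩
      simp only [Set.mem_singleton_iff]
      rintro rfl
      exact hc heW
    exact ⟨W.transfer _ hsub⟩

/-- In a tree, a pair covers an edge iff its endpoints are separated by
deleting that edge. -/
lemma covers_iff (hT : G.IsTree) (u w : V) (e : Sym2 V) :
    Covers G u w e ↔ ¬ (G.deleteEdges {e}).Reachable u w := by
  constructor
  · rintro ⟨p, hp, hpe⟩ ⟨W⟩
    have hsub : ∀ e' ∈ W.edges, e' ∈ G.edgeSet := fun e' hW =>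
      ((SimpleGraph.edgeSet_deleteEdges _).symm ▸ W.edges_subset_edgeSet hW).1
    have heW : e ∉ W.edges := by
      intro hW
      have := W.edges_subset_edgeSet hW
      rw [SimpleGraph.edgeSet_deleteEdges] at this
      exact this.2 rfl
    set q := (W.transfer G hsub).bypass with hqdef
    have hq : q.IsPath := SimpleGraph.Walk.bypass_isPath _
    have heq : e ∉ q.edges := fun hq' => heW (by
      have := SimpleGraph.Walk.edges_bypass_subset _ hq'
      rwa [SimpleGraph.Walk.edges_transfer] at this)
    have huniq := hT.IsAcyclic.path_unique (⟨p, hp⟩ : G.Path u w) ⟨q, hq⟩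
    have : p = q := congrArg Subtype.val huniq
    rw [this] at hpe
    exact heq hpe
  · intro h
    obtain ⟨W⟩ := hT.isConnected.preconnected u w
    refine ⟨W.bypass, SimpleGraph.Walk.bypass_isPath _, ?_⟩
    by_contra heW
    refine h ⟨SimpleGraph.Walk.toDeleteEdges {e} W.bypass ?_⟩
    intro e' h'
    simp only [Set.mem_singleton_iff]
    rintro rfl
    exact heW h'

section Core

variable (hT : G.IsTree) {a b d x y x' y' : V}
  (hab : G.Adj a b) (had : G.Adj a d) (hxy : G.Adj x y) (hxy' : G.Adj x' y')

include hT hab had hxy hxy'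

/-- The core of the exchange lemma, after normalising `p1` to lie on the `b`
side of the cut `s(a,b)`. -/
lemma exchange_core {p1 p2 q1 q2 r1 r2 : V}
    (hpb : (G.deleteEdges {s(a, b)}).Reachable p1 b)
    (hpE : ¬ (G.deleteEdges {s(x, y)}).Reachable p1 p2)
    (hpE' : ¬ (G.deleteEdges {s(x', y')}).Reachable p1 p2)
    (hq2 : ¬ (G.deleteEdges {s(a, d)}).Reachable q1 q2)
    (hqE : ¬ (G.deleteEdges {s(x, y)}).Reachable q1 q2)
    (hq1 : (G.deleteEdges {s(a, b)}).Reachable q1 q2)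
    (hqE' : (G.deleteEdges {s(x', y')}).Reachable q1 q2)
    (hr2 : ¬ (G.deleteEdges {s(a, d)}).Reachable r1 r2)
    (hrE' : ¬ (G.deleteEdges {s(x', y')}).Reachable r1 r2)
    (hr1 : (G.deleteEdges {s(a, b)}).Reachable r1 r2)
    (hrE : (G.deleteEdges {s(x, y)}).Reachable r1 r2) : False := by
  -- basic cut-crossing facts
  have F1 := cross s(a, b) had hq1 hq2
  have F2 := cross s(a, b) hxy hq1 hqE
  have F3 := cross s(x', y') had hqE' hq2
  have F5 := cross s(a, b) had hr1 hr2
  have F6 := cross s(a, b) hxy' hr1 hrE'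
  have F7 := cross s(x, y) had hrE hr2
  have F8 := cross s(x, y) hxy' hrE hrE'
  have hne1 : s(a, b) ≠ s(x, y) := fun hEq => hqE (hEq ▸ hq1)
  have hne2 : s(a, b) ≠ s(x', y') := fun hEq => hrE' (hEq ▸ hr1)
  have hbE : (G.deleteEdges {s(x, y)}).Reachable a b := reach_of_edge _ hab hne1
  have hbE' : (G.deleteEdges {s(x', y')}).Reachable a b := reach_of_edge _ hab hne2
  have hxA1 : (G.deleteEdges {s(a, b)}).Reachable a x := F1.1.symm.trans F2.1
  have hx'A1 : (G.deleteEdges {s(a, b)}).Reachable a x' := F5.1.symm.trans F6.1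
  have hbridge := not_reach_del_self hT hab
  -- p1 is on the side of x/x'-cuts containing b and a
  have hpEb : (G.deleteEdges {s(x, y)}).Reachable p1 b := by
    by_contra hc
    have hx1 := (cross s(a, b) hxy hpb hc).1
    exact hbridge ((hxA1.trans hx1.symm).trans hpb)
  have hpE'b : (G.deleteEdges {s(x', y')}).Reachable p1 b := by
    by_contra hc
    have hx1 := (cross s(a, b) hxy' hpb hc).1
    exact hbridge ((hx'A1.trans hx1.symm).trans hpb)
  have hp1CE : (G.deleteEdges {s(x, y)}).Reachable p1 a := hpEb.trans hbE.symm
  have hp1CE' : (G.deleteEdges {s(x', y')}).Reachable p1 a := hpE'b.trans hbE'.symm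
  have hp2E : ¬ (G.deleteEdges {s(x, y)}).Reachable p2 a := fun hc =>
    hpE (hp1CE.trans hc.symm)
  have hp2E' : ¬ (G.deleteEdges {s(x', y')}).Reachable p2 a := fun hc =>
    hpE' (hp1CE'.trans hc.symm)
  -- one endpoint of q is on the far side of the e-cut, but on the a-side of
  -- the e'-cut
  have hq1CE' : (G.deleteEdges {s(x', y')}).Reachable q1 a := F3.1
  have hq2CE' : (G.deleteEdges {s(x', y')}).Reachable q2 a := hqE'.symm.trans F3.1
  obtain ⟨s, hsE, hsE'⟩ : ∃ s : V, ¬ (G.deleteEdges {s(x, y)}).Reachable s a ∧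
      (G.deleteEdges {s(x', y')}).Reachable s a := by
    by_cases hc : (G.deleteEdges {s(x, y)}).Reachable q1 a
    · exact ⟨q2, fun h => hqE (hc.trans h.symm), hq2CE'⟩
    · exact ⟨q1, hc, hq1CE'⟩
  have hsp2 : (G.deleteEdges {s(x, y)}).Reachable s p2 := reach_del_of_both hT hxy hsE hp2E
  have hsp2' : ¬ (G.deleteEdges {s(x', y')}).Reachable s p2 := fun hc =>
    hp2E' (hc.symm.trans hsE')
  have hx'CE : (G.deleteEdges {s(x, y)}).Reachable a x' := F7.1.symm.trans F8.1
  have hsx' := (cross s(x, y) hxy' hsp2 hsp2').1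
  exact hsE (hsx'.trans hx'CE.symm)

/-- The exchange lemma in terms of separation. -/
lemma exchange {p1 p2 q1 q2 r1 r2 : V}
    (hp1 : ¬ (G.deleteEdges {s(a, b)}).Reachable p1 p2)
    (hpE : ¬ (G.deleteEdges {s(x, y)}).Reachable p1 p2)
    (hpE' : ¬ (G.deleteEdges {s(x', y')}).Reachable p1 p2)
    (hq2 : ¬ (G.deleteEdges {s(a, d)}).Reachable q1 q2)
    (hqE : ¬ (G.deleteEdges {s(x, y)}).Reachable q1 q2)
    (hq1 : (G.deleteEdges {s(a, b)}).Reachable q1 q2)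
    (hqE' : (G.deleteEdges {s(x', y')}).Reachable q1 q2)
    (hr2 : ¬ (G.deleteEdges {s(a, d)}).Reachable r1 r2)
    (hrE' : ¬ (G.deleteEdges {s(x', y')}).Reachable r1 r2)
    (hr1 : (G.deleteEdges {s(a, b)}).Reachable r1 r2)
    (hrE : (G.deleteEdges {s(x, y)}).Reachable r1 r2) : False := by
  rcases reach_del_or hT hab p1 with hc | hc
  · have hc2 : (G.deleteEdges {s(a, b)}).Reachable p2 b := by
      rcases reach_del_or hT hab p2 with hc' | hc'
      · exact absurd (hc.trans hc'.symm) hp1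
      · exact hc'
    exact exchange_core hT hab had hxy hxy' hc2 (fun h => hpE h.symm)
      (fun h => hpE' h.symm) hq2 hqE hq1 hqE' hr2 hrE' hr1 hrE
  · exact exchange_core hT hab had hxy hxy' hc hpE hpE' hq2 hqE hq1 hqE' hr2 hrE' hr1 hrE

end Core

end Stmt16Aux

/- STATEMENT 16: the exchange step of the pairing algorithm.  `e1, e2` are
adjacent tree edges at the start of the abundant path `Q`; `f, f'` cover `e1`
but not `e2`, `g, g'` cover `e2` but not `e1`; the swap is triggered by an edge
`e ∉ Q` covered by both `f` and `g` but by neither `f'` nor `g'`.  Replacing the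
pairs `(f, g)`, `(f', g')` by `(f, g')`, `(f', g)` never increases, for any tree
edge `e' ∉ Q`, the number of pairs both of whose links cover `e'`. -/
open Classical in
theorem stmt16 {V : Type*} [Fintype V] [DecidableEq V] (G : SimpleGraph V)
    (hT : G.IsTree) (Q : Set (Sym2 V)) (e1 e2 : Sym2 V)
    (he1 : e1 ∈ G.edgeSet) (he2 : e2 ∈ G.edgeSet)
    (hadj : ∃ a b d : V, b ≠ d ∧ e1 = s(a, b) ∧ e2 = s(a, d))
    (f g f' g' : V × V) (e : Sym2 V) (he : e ∈ G.edgeSet) (heQ : e ∉ Q)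
    (hf1 : Covers G f.1 f.2 e1) (hf2 : ¬ Covers G f.1 f.2 e2)
    (hf'1 : Covers G f'.1 f'.2 e1) (hf'2 : ¬ Covers G f'.1 f'.2 e2)
    (hg2 : Covers G g.1 g.2 e2) (hg1 : ¬ Covers G g.1 g.2 e1)
    (hg'2 : Covers G g'.1 g'.2 e2) (hg'1 : ¬ Covers G g'.1 g'.2 e1)
    (hfe : Covers G f.1 f.2 e) (hge : Covers G g.1 g.2 e)
    (hf'e : ¬ Covers G f'.1 f'.2 e) (hg'e : ¬ Covers G g'.1 g'.2 e)
    (e' : Sym2 V) (he' : e' ∈ G.edgeSet) (he'Q : e' ∉ Q) :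
    ((if Covers G f.1 f.2 e' ∧ Covers G g'.1 g'.2 e' then 1 else 0) +
      (if Covers G f'.1 f'.2 e' ∧ Covers G g.1 g.2 e' then 1 else 0) : ℕ) ≤
    (if Covers G f.1 f.2 e' ∧ Covers G g.1 g.2 e' then 1 else 0) +
      (if Covers G f'.1 f'.2 e' ∧ Covers G g'.1 g'.2 e' then 1 else 0) := by
  obtain ⟨a, b, d, hbd, rfl, rfl⟩ := hadj
  have hab : G.Adj a b := he1
  have had : G.Adj a d := he2
  -- destructure e and e'
  obtain ⟨⟨x, y⟩, rfl⟩ := Quot.exists_rep e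
  obtain ⟨⟨x', y'⟩, rfl⟩ := Quot.exists_rep e'
  have hxy : G.Adj x y := he
  have hxy' : G.Adj x' y' := he'
  -- translate coverage into separation
  simp only [Stmt16Aux.covers_iff hT, not_not] at hf1 hf2 hf'1 hf'2 hg2 hg1 hg'2 hg'1 hfe hge hf'e hg'e ⊢
  by_cases hA : ¬ (G.deleteEdges {s(x', y')}).Reachable f.1 f.2 ∧
      ¬ (G.deleteEdges {s(x', y')}).Reachable g'.1 g'.2 <;>
    by_cases hB : ¬ (G.deleteEdges {s(x', y')}).Reachable f'.1 f'.2 ∧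
      ¬ (G.deleteEdges {s(x', y')}).Reachable g.1 g.2
  · -- both new pairs cover e' : then both old pairs cover it too
    rw [if_pos hA, if_pos hB, if_pos ⟨hA.1, hB.2⟩, if_pos ⟨hB.1, hA.2⟩]
  · -- only (f, g') covers e'
    rw [if_pos hA, if_neg hB]
    by_cases hge' : ¬ (G.deleteEdges {s(x', y')}).Reachable g.1 g.2
    · rw [if_pos ⟨hA.1, hge'⟩]; omega
    · push_neg at hge'
      exact absurd (Stmt16Aux.exchange hT hab had hxy hxy' hf1 hfe hA.1 hg2 hge hg1
        hge' hg'2 hA.2 hg'1 hg'e) (fun h => h)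
  · -- only (f', g) covers e'
    rw [if_neg hA, if_pos hB]
    by_cases hfe' : ¬ (G.deleteEdges {s(x', y')}).Reachable f.1 f.2
    · rw [if_pos ⟨hfe', hB.2⟩]; omega
    · push_neg at hfe'
      exact absurd (Stmt16Aux.exchange hT had hab hxy hxy' hg2 hge hB.2 hf1 hfe hf2
        hfe' hf'1 hB.1 hf'2 hf'e) (fun h => h)
  · rw [if_neg hA, if_neg hB]; omega
end

section
/- Let x be a feasible fractional solution to the NODE-LP on a binary tree T with exactly one deficient path P = u_1u_2…u_j, and let k be such that 3k·x is integral. In the path-coloring phase (Algorithm 3), each edge of P, at the moment it is processed, either already has all 2k colors or all colored links covering it have pairwise distinct colors; hence after processing, every edge of P is covered by links of all 2k distinct colors. -/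
open Classical in
/-- `x(δ(e1) ∪ δ(e2) ∪ δ(e3))`: total weight of links covering one of three edges. -/
noncomputable def tripleWeight {V : Type*} [Fintype V] (G : SimpleGraph V)
    (x : V × V → ℝ) (e1 e2 e3 : Sym2 V) : ℝ :=
  ∑ ℓ ∈ Finset.univ.filter (fun ℓ : V × V =>
      Covers G ℓ.1 ℓ.2 e1 ∨ Covers G ℓ.1 ℓ.2 e2 ∨ Covers G ℓ.1 ℓ.2 e3), x ℓ

/-!
Number the edges of `P` along the path. In a tree, a link whose path contains two edges of `P`
also contains every edge of `P` between them, so the edges of `P` crossed by a fixed link form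
an interval of indices. Every edge of `P` is crossed by `3k·x(δ(e)) ≥ 3k ≥ 2k` copies of links.
Sweep the edges in order and, at edge `t`, put each color still missing there on a copy of a
crossing link not used so far. The invariant is that two links sharing a color never both cross
an edge at or after the current one. Hence the colors present at `t` sit on distinct copies, and
when one of the `2k` colors is missing a spare crossing copy exists. Giving it the missing color
keeps the invariant: a link that already has that color and crosses a later edge has been reached
by the sweep, so by the interval property it crosses `t` as well, and the color was not missing.
-/

open Finset

section IntervalColoring

open Classical

variable {ι κ : Type*} {I : ι → Set ℕ} {m : ι → ℕ}

/-- The state of the sweep at position `t`: `I ℓ` is the set of positions crossed by the link `ℓ`,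
which has `m ℓ` copies, and `A ℓ` is the set of colors given to copies of `ℓ`. -/
structure IsGreedyState (I : ι → Set ℕ) (m : ι → ℕ) (A : ι → Finset κ) (t : ℕ) : Prop where
  card_le : ∀ ℓ, #(A ℓ) ≤ m ℓ
  exists_le_mem : ∀ ℓ, (A ℓ).Nonempty → ∃ s ≤ t, s ∈ I ℓ
  disjoint : ∀ ℓ₁ ℓ₂, ℓ₁ ≠ ℓ₂ → ∀ i ≥ t, i ∈ I ℓ₁ → i ∈ I ℓ₂ → Disjoint (A ℓ₁) (A ℓ₂)

namespace IsGreedyState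

variable {A : ι → Finset κ} {t : ℕ}

theorem empty : IsGreedyState I m (fun _ ↦ (∅ : Finset κ)) 0 where
  card_le _ := by simp
  exists_le_mem _ h := absurd h Finset.not_nonempty_empty
  disjoint _ _ _ _ _ _ _ := disjoint_bot_left

theorem mono (hA : IsGreedyState I m A t) {t' : ℕ} (htt' : t ≤ t') :
    IsGreedyState I m A t' where
  card_le := hA.card_le
  exists_le_mem ℓ h := by
    obtain ⟨s, hs, hsI⟩ := hA.exists_le_mem ℓ h
    exact ⟨s, hs.trans htt', hsI⟩
  disjoint ℓ₁ ℓ₂ hne i hi := hA.disjoint ℓ₁ ℓ₂ hne i (htt'.trans hi)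

theorem not_mem_of_missing (hI : ∀ ℓ, (I ℓ).OrdConnected) (hA : IsGreedyState I m A t)
    {c : κ} (hc : ¬∃ ℓ, t ∈ I ℓ ∧ c ∈ A ℓ) {ℓ : ι} {i : ℕ} (hti : t ≤ i) (hi : i ∈ I ℓ) :
    c ∉ A ℓ := fun hcℓ ↦ by
  obtain ⟨s, hst, hs⟩ := hA.exists_le_mem ℓ ⟨c, hcℓ⟩
  exact hc ⟨ℓ, (hI ℓ).out hs hi ⟨hst, hti⟩, hcℓ⟩

theorem exists_card_lt [Fintype ι] [Fintype κ] (hA : IsGreedyState I m A t)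
    (hdepth : Fintype.card κ ≤ ∑ ℓ with t ∈ I ℓ, m ℓ) {c : κ}
    (hc : ¬∃ ℓ, t ∈ I ℓ ∧ c ∈ A ℓ) : ∃ ℓ, t ∈ I ℓ ∧ #(A ℓ) < m ℓ := by
  set S := univ.filter (t ∈ I ·)
  have hdisj : (S : Set ι).PairwiseDisjoint A := fun ℓ₁ h₁ ℓ₂ h₂ hne ↦
    hA.disjoint ℓ₁ ℓ₂ hne t le_rfl (mem_filter.mp h₁).2 (mem_filter.mp h₂).2
  have hsub : S.biUnion A ⊆ univ.erase c := fun c' hc' ↦ by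
    obtain ⟨ℓ, hℓ, hc'ℓ⟩ := mem_biUnion.mp hc'
    exact mem_erase.mpr ⟨fun h ↦ hc ⟨ℓ, (mem_filter.mp hℓ).2, h ▸ hc'ℓ⟩, mem_univ _⟩
  have hlt : ∑ ℓ ∈ S, #(A ℓ) < ∑ ℓ ∈ S, m ℓ := by
    calc ∑ ℓ ∈ S, #(A ℓ) = #(S.biUnion A) := (card_biUnion hdisj).symm
      _ ≤ #(univ.erase c) := card_le_card hsub
      _ < Fintype.card κ := card_erase_lt_of_mem (mem_univ c)
      _ ≤ ∑ ℓ ∈ S, m ℓ := hdepth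
  obtain ⟨ℓ, hℓ, h⟩ := exists_lt_of_sum_lt hlt
  exact ⟨ℓ, (mem_filter.mp hℓ).2, h⟩

theorem update_insert (hI : ∀ ℓ, (I ℓ).OrdConnected) (hA : IsGreedyState I m A t) {c : κ}
    (hc : ¬∃ ℓ, t ∈ I ℓ ∧ c ∈ A ℓ) {ℓ₀ : ι} (hℓ₀ : t ∈ I ℓ₀) (hcard : #(A ℓ₀) < m ℓ₀) :
    IsGreedyState I m (Function.update A ℓ₀ (insert c (A ℓ₀))) t := by
  have hnew : ∀ ℓ, ℓ ≠ ℓ₀ → ∀ i ≥ t, i ∈ I ℓ₀ → i ∈ I ℓ →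
      Disjoint (insert c (A ℓ₀)) (A ℓ) := fun ℓ hne i hti hi₀ hi ↦
    disjoint_insert_left.mpr
      ⟨hA.not_mem_of_missing hI hc hti hi, hA.disjoint ℓ₀ ℓ hne.symm i hti hi₀ hi⟩
  refine ⟨fun ℓ ↦ ?_, fun ℓ hℓ ↦ ?_, fun ℓ₁ ℓ₂ hne i hti hi₁ hi₂ ↦ ?_⟩
  · rcases eq_or_ne ℓ₀ ℓ with rfl | h
    · simpa using (card_insert_le c (A ℓ₀)).trans hcard
    · simpa [h.symm] using hA.card_le ℓ
  · rcases eq_or_ne ℓ₀ ℓ with rfl | h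
    · exact ⟨t, le_rfl, hℓ₀⟩
    · exact hA.exists_le_mem ℓ (by simpa [h.symm] using hℓ)
  · by_cases h₁ : ℓ₁ = ℓ₀
    · subst h₁
      simpa [hne.symm] using hnew ℓ₂ hne.symm i hti hi₁ hi₂
    by_cases h₂ : ℓ₂ = ℓ₀
    · subst h₂
      simpa [h₁] using (hnew ℓ₁ h₁ i hti hi₂ hi₁).symm
    · simpa [h₁, h₂] using hA.disjoint ℓ₁ ℓ₂ hne i hti hi₁ hi₂

theorem exists_complete [Fintype ι] [Fintype κ] (hI : ∀ ℓ, (I ℓ).OrdConnected)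
    (hA : IsGreedyState I m A t) (hdepth : Fintype.card κ ≤ ∑ ℓ with t ∈ I ℓ, m ℓ) :
    ∃ A', IsGreedyState I m A' t ∧ (∀ ℓ, A ℓ ⊆ A' ℓ) ∧ ∀ c, ∃ ℓ, t ∈ I ℓ ∧ c ∈ A' ℓ := by
  suffices ∀ M : Finset κ, ∃ A', IsGreedyState I m A' t ∧ (∀ ℓ, A ℓ ⊆ A' ℓ) ∧
      ∀ c ∈ M, ∃ ℓ, t ∈ I ℓ ∧ c ∈ A' ℓ by
    obtain ⟨A', hA', hsub, hall⟩ := this univ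
    exact ⟨A', hA', hsub, fun c ↦ hall c (mem_univ c)⟩
  intro M
  induction M using Finset.induction_on with
  | empty => exact ⟨A, hA, fun _ ↦ subset_rfl, by simp⟩
  | insert c M _ ih =>
    obtain ⟨A₁, hA₁, hsub₁, hM⟩ := ih
    by_cases hc : ∃ ℓ, t ∈ I ℓ ∧ c ∈ A₁ ℓ
    · exact ⟨A₁, hA₁, hsub₁, by simpa [hc] using hM⟩
    obtain ⟨ℓ₀, hℓ₀, hcard⟩ := hA₁.exists_card_lt hdepth hc
    set A₂ := Function.update A₁ ℓ₀ (insert c (A₁ ℓ₀))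
    have hsub₂ : ∀ ℓ, A₁ ℓ ⊆ A₂ ℓ := fun ℓ ↦ by
      rcases eq_or_ne ℓ₀ ℓ with rfl | h
      · simp [A₂]
      · simp [A₂, h.symm]
    refine ⟨A₂, hA₁.update_insert hI hc hℓ₀ hcard, fun ℓ ↦ (hsub₁ ℓ).trans (hsub₂ ℓ), ?_⟩
    rintro c' hc'
    rcases mem_insert.mp hc' with rfl | hc'
    · exact ⟨ℓ₀, hℓ₀, by simp [A₂]⟩
    · obtain ⟨ℓ, htℓ, hcℓ⟩ := hM c' hc'
      exact ⟨ℓ, htℓ, hsub₂ ℓ hcℓ⟩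

end IsGreedyState

theorem exists_coloring_of_ordConnected [Fintype ι] [Fintype κ] (hI : ∀ ℓ, (I ℓ).OrdConnected)
    {N : ℕ} (hdepth : ∀ t < N, Fintype.card κ ≤ ∑ ℓ with t ∈ I ℓ, m ℓ) :
    ∃ A : ι → Finset κ, (∀ ℓ, #(A ℓ) ≤ m ℓ) ∧ ∀ t < N, ∀ c, ∃ ℓ, t ∈ I ℓ ∧ c ∈ A ℓ := by
  suffices ∀ T ≤ N, ∃ A : ι → Finset κ, IsGreedyState I m A T ∧
      ∀ t < T, ∀ c, ∃ ℓ, t ∈ I ℓ ∧ c ∈ A ℓ by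
    obtain ⟨A, hA, hall⟩ := this N le_rfl
    exact ⟨A, hA.card_le, hall⟩
  intro T hT
  induction T with
  | zero => exact ⟨_, IsGreedyState.empty, by simp⟩
  | succ T ih =>
    obtain ⟨A, hA, hall⟩ := ih (by omega)
    obtain ⟨A', hA', hsub, hT'⟩ := hA.exists_complete hI (hdepth T (by omega))
    refine ⟨A', hA'.mono T.le_succ, fun t ht c ↦ ?_⟩
    rcases (Nat.lt_succ_iff_lt_or_eq.mp ht) with ht | rfl
    · obtain ⟨ℓ, htℓ, hc⟩ := hall t ht c
      exact ⟨ℓ, htℓ, hsub ℓ hc⟩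
    · exact hT' c

end IntervalColoring

namespace SimpleGraph

variable {V : Type*} {G : SimpleGraph V}

theorem IsAcyclic.edges_subset_of_mem_support (hG : G.IsAcyclic) {u v x y : V}
    {p : G.Walk u v} (hx : x ∈ p.support) (hy : y ∈ p.support) {r : G.Walk x y}
    (hr : r.IsPath) : r.edges ⊆ p.edges := by
  classical
  set s := ((p.takeUntil x hx).reverse.append (p.takeUntil y hy)).bypass
  have hrs : r = s := congrArg Subtype.val <|
    (hG.subsingleton_path x y).elim ⟨r, hr⟩ ⟨s, Walk.bypass_isPath _⟩
  rw [hrs]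
  intro e he
  replace he := Walk.edges_bypass_subset_edges _ he
  rw [Walk.edges_append, List.mem_append, Walk.edges_reverse, List.mem_reverse] at he
  exact he.elim (fun h ↦ p.edges_takeUntil_subset_edges hx h)
    (fun h ↦ p.edges_takeUntil_subset_edges hy h)

theorem Walk.lt_length_of_covers {u v a b : V} {w : G.Walk u v} {i : ℕ}
    (h : Covers G a b s(w.getVert i, w.getVert (i + 1))) : i < w.length := by
  by_contra! hi
  obtain ⟨q, -, hq⟩ := h
  rw [w.getVert_of_length_le hi, w.getVert_of_length_le (by omega)] at hq
  exact (q.adj_of_mem_edges hq).ne rfl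

theorem IsAcyclic.ordConnected_covers (hG : G.IsAcyclic) {u v : V} {w : G.Walk u v}
    (hw : w.IsPath) (a b : V) :
    {i | Covers G a b s(w.getVert i, w.getVert (i + 1))}.OrdConnected := by
  refine ⟨fun i hi l hl j ⟨hij, hjl⟩ ↦ ?_⟩
  rcases hij.eq_or_lt with rfl | hij
  · exact hi
  rcases hjl.eq_or_lt with rfl | hjl
  · exact hl
  have hlen := Walk.lt_length_of_covers hl
  obtain ⟨q, hq, hiq⟩ := hi
  obtain ⟨q', hq', hlq⟩ := hl
  obtain rfl : q = q' := congrArg Subtype.val <|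
    (hG.subsingleton_path a b).elim ⟨q, hq⟩ ⟨q', hq'⟩
  -- `r`, the stretch of `w` between the edges `i` and `l`, joins two vertices of the path `q`
  -- and so lies inside `q` by acyclicity
  set r := (w.drop (i + 1)).take (l - (i + 1))
  have hy : (w.drop (i + 1)).getVert (l - (i + 1)) ∈ q.support := by
    rw [Walk.drop_getVert, Nat.add_sub_cancel' (by omega)]
    exact q.fst_mem_support_of_mem_edges hlq
  have hsub := hG.edges_subset_of_mem_support (q.snd_mem_support_of_mem_edges hiq) hy
    ((hw.drop (i + 1)).take (l - (i + 1)))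
  refine ⟨q, hq, hsub ((Walk.mk_mem_edges_iff_exists r).mpr ⟨j - (i + 1), ?_, ?_⟩)⟩
  · simp only [r, Walk.take_length, Walk.drop_length]
    omega
  · simp only [r, Walk.take_getVert, Walk.drop_getVert]
    congr 2 <;> omega

end SimpleGraph

open Classical in
theorem stmt18_general {V : Type*} [Fintype V] [DecidableEq V] (G : SimpleGraph V)
    (hT : G.IsTree)
    (x : V × V → ℝ)
    (hedge : ∀ e ∈ G.edgeSet, 1 ≤ covWeight G x e)
    (P : Finset (Sym2 V))
    (hpath : ∃ (u v : V) (w : G.Walk u v), w.IsPath ∧ w.edges.toFinset = P)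
    (k : ℕ) (hint : ∀ ℓ, ∃ m : ℕ, 3 * (k : ℝ) * x ℓ = m) :
    ∃ col : V × V → Fin (2 * k) → ℕ,
      (∀ ℓ, ((∑ c : Fin (2 * k), col ℓ c : ℕ) : ℝ) ≤ 3 * (k : ℝ) * x ℓ) ∧
      (∀ e ∈ P, ∀ c : Fin (2 * k),
        ∃ ℓ : V × V, Covers G ℓ.1 ℓ.2 e ∧ 0 < col ℓ c) := by
  obtain ⟨u, v, w, hw, rfl⟩ := hpath
  choose m hm using hint
  let I : V × V → Set ℕ := fun ℓ ↦ {i | Covers G ℓ.1 ℓ.2 s(w.getVert i, w.getVert (i + 1))}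
  have hdepth : ∀ t < w.length, Fintype.card (Fin (2 * k)) ≤ ∑ ℓ with t ∈ I ℓ, m ℓ := by
    intro t ht
    have hcov := hedge s(w.getVert t, w.getVert (t + 1)) (w.adj_getVert_succ ht)
    have hsum : ((∑ ℓ with t ∈ I ℓ, m ℓ : ℕ) : ℝ) =
        3 * k * covWeight G x s(w.getVert t, w.getVert (t + 1)) := by
      rw [covWeight, mul_sum, Nat.cast_sum]
      exact sum_congr rfl fun ℓ _ ↦ (hm ℓ).symm
    rw [Fintype.card_fin, ← Nat.cast_le (α := ℝ), hsum]
    push_cast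
    nlinarith
  obtain ⟨A, hcard, hcolors⟩ :=
    exists_coloring_of_ordConnected
      (fun ℓ : V × V ↦ hT.isAcyclic.ordConnected_covers hw ℓ.1 ℓ.2) hdepth
  refine ⟨fun ℓ c ↦ if c ∈ A ℓ then 1 else 0, fun ℓ ↦ ?_, fun e he c ↦ ?_⟩
  · rw [hm ℓ, Nat.cast_le]
    simpa [sum_boole] using hcard ℓ
  · induction e using Sym2.ind with | _ a b => ?_
    obtain ⟨t, ht, hab⟩ := (w.mk_mem_edges_iff_exists).mp (List.mem_toFinset.mp he)
    obtain ⟨ℓ, hℓ, hc⟩ := hcolors t ht c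
    exact ⟨ℓ, hab ▸ hℓ, by simp [hc]⟩

open Classical in
theorem stmt18 {V : Type*} [Fintype V] [DecidableEq V] (G : SimpleGraph V)
    (hT : G.IsTree)
    (x : V × V → ℝ) (hx0 : ∀ ℓ, 0 ≤ x ℓ)
    (hedge : ∀ e ∈ G.edgeSet, 1 ≤ covWeight G x e)
    (hnode : ∀ (v : V) (e1 e2 e3 : Sym2 V), e1 ≠ e2 → e1 ≠ e3 → e2 ≠ e3 →
      (∀ e : Sym2 V, (e ∈ G.edgeSet ∧ v ∈ e) ↔ (e = e1 ∨ e = e2 ∨ e = e3)) →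
      2 ≤ tripleWeight G x e1 e2 e3)
    (P : Finset (Sym2 V)) (hPsub : ↑P ⊆ G.edgeSet)
    (hPdef : ∀ e ∈ P, covWeight G x e < 4/3)
    (hPall : ∀ e ∈ G.edgeSet, covWeight G x e < 4/3 → e ∈ P)
    (hpath : ∃ (u v : V) (w : G.Walk u v), w.IsPath ∧ w.edges.toFinset = P)
    (k : ℕ) (hk : 0 < k) (hint : ∀ ℓ, ∃ m : ℕ, 3 * (k : ℝ) * x ℓ = m) :
    ∃ col : V × V → Fin (2 * k) → ℕ,
      (∀ ℓ, ((∑ c : Fin (2 * k), col ℓ c : ℕ) : ℝ) ≤ 3 * (k : ℝ) * x ℓ) ∧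
      (∀ e ∈ P, ∀ c : Fin (2 * k),
        ∃ ℓ : V × V, Covers G ℓ.1 ℓ.2 e ∧ 0 < col ℓ c) :=
  stmt18_general G hT x hedge P hpath k hint
end
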